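/- Let P and Q be orthogonal projections on a Hilbert space with P − Q compact and finite rank. Then Index(P,Q) := dim Ker(P − Q − 1) − dim Ker(Q − P − 1) equals tr(P − Q) = dim Ran P − dim Ran Q when both P and Q have finite rank. -/

import Mathlib

/-!
For orthogonal projections `P`, `Q` one has `ker (P - Q - 1) = ran P ⊓ (ran Q)ᗮ`: if
`P x - Q x = x` then `Q P x = 2 Q x` and `P Q x = 0`, so
`2 ‖Q x‖² = ⟪Q x, Q P x⟫ = ⟪P Q x, x⟫ = 0`.

For finite-dimensional subspaces `U`, `V`, the orthogonal projection onto `V`, restricted to `U`,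
has kernel `U ⊓ Vᗮ`, and the orthogonal complement of its image inside `V` is `V ⊓ Uᗮ`.
Counting dimensions on both sides of this map gives
`dim (U ⊓ Vᗮ) - dim (V ⊓ Uᗮ) = dim U - dim V`.
-/

open Module

theorem LinearMap.finrank_map_add_finrank_inf_ker {K M N : Type*} [DivisionRing K]
    [AddCommGroup M] [Module K M] [AddCommGroup N] [Module K N]
    (f : M →ₗ[K] N) (p : Submodule K M) [FiniteDimensional K p] :
    finrank K (p.map f) + finrank K ↥(p ⊓ LinearMap.ker f) = finrank K p := by
  rw [← (f.domRestrict p).finrank_range_add_finrank_ker, LinearMap.range_domRestrict,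
    LinearMap.ker_domRestrict, ← Submodule.map_comap_subtype, Submodule.finrank_map_subtype_eq]

namespace Submodule

variable {𝕜 E : Type*} [RCLike 𝕜] [NormedAddCommGroup E] [InnerProductSpace 𝕜 E]

theorem orthogonal_map_starProjection_inf (U V : Submodule 𝕜 E) [V.HasOrthogonalProjection] :
    (U.map (V.starProjection : E →ₗ[𝕜] E))ᗮ ⊓ V = Uᗮ ⊓ V := by
  ext v
  simp only [mem_inf, mem_orthogonal, mem_map, ContinuousLinearMap.coe_coe, forall_exists_index,
    and_imp, and_congr_left_iff]
  intro hv
  simp only [forall_apply_eq_imp_iff₂, inner_starProjection_left_eq_right,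
    starProjection_eq_self_iff.mpr hv]

theorem finrank_inf_orthogonal_add_finrank (U V : Submodule 𝕜 E)
    [FiniteDimensional 𝕜 U] [FiniteDimensional 𝕜 V] :
    finrank 𝕜 ↥(U ⊓ Vᗮ) + finrank 𝕜 V = finrank 𝕜 ↥(V ⊓ Uᗮ) + finrank 𝕜 U := by
  have hW : U.map (V.starProjection : E →ₗ[𝕜] E) ≤ V :=
    LinearMap.map_le_range.trans_eq V.range_starProjection
  have hU := (V.starProjection : E →ₗ[𝕜] E).finrank_map_add_finrank_inf_ker U
  have hV := finrank_add_inf_finrank_orthogonal hW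
  rw [ker_starProjection] at hU
  rw [orthogonal_map_starProjection_inf, inf_comm] at hV
  omega

end Submodule

namespace LinearMap.IsSymmetricProjection

variable {𝕜 E : Type*} [RCLike 𝕜] [NormedAddCommGroup E] [InnerProductSpace 𝕜 E]
  {p q : E →ₗ[𝕜] E}

theorem apply_apply (hp : p.IsSymmetricProjection) (x : E) : p (p x) = p x :=
  LinearMap.congr_fun hp.isIdempotentElem x

theorem ker_sub_sub_one (hp : p.IsSymmetricProjection) (hq : q.IsSymmetricProjection) :
    LinearMap.ker (p - q - 1) = LinearMap.range p ⊓ (LinearMap.range q)ᗮ := by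
  rw [hq.isSymmetric.orthogonal_range]
  ext x
  simp only [Submodule.mem_inf, LinearMap.mem_ker,
    LinearMap.IsIdempotentElem.mem_range_iff hp.isIdempotentElem,
    LinearMap.sub_apply, Module.End.one_apply]
  constructor
  · intro hx
    have hpx : p x = x + q x := by rw [← sub_eq_zero, ← hx]; abel
    have hpqx : p (q x) = 0 := by
      simpa [hp.apply_apply] using congrArg p hpx
    have hqpx : q (p x) = q x + q x := by rw [hpx, map_add, hq.apply_apply]
    have hqx : q x = 0 := by
      have htwice : (2 : 𝕜) * inner 𝕜 (q x) (q x) = 0 := calc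
        (2 : 𝕜) * inner 𝕜 (q x) (q x) = inner 𝕜 (q x) (q (p x)) := by
          rw [hqpx, inner_add_right]; ring
        _ = inner 𝕜 (p (q x)) x := by
          rw [← hq.isSymmetric, hq.apply_apply, hp.isSymmetric]
        _ = 0 := by rw [hpqx, inner_zero_left]
      simpa using htwice
    exact ⟨by rw [hpx, hqx, add_zero], hqx⟩
  · rintro ⟨hpx, hqx⟩
    rw [hpx, hqx, sub_zero, sub_self]

end LinearMap.IsSymmetricProjection

variable {H : Type*} [NormedAddCommGroup H] [InnerProductSpace ℂ H] [CompleteSpace H]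

/-- For orthogonal projections `P`, `Q` of finite rank (so that `P − Q` is compact),
`Index(P,Q) = dim Ker(P − Q − 1) − dim Ker(Q − P − 1)` equals
`tr(P − Q) = dim Ran P − dim Ran Q`. -/
theorem index_of_finite_rank_projections
    (P Q : H →L[ℂ] H)
    (hPsa : IsSelfAdjoint P) (hP2 : IsIdempotentElem P)
    (hQsa : IsSelfAdjoint Q) (hQ2 : IsIdempotentElem Q)
    (hPfin : FiniteDimensional ℂ (LinearMap.range (P : H →ₗ[ℂ] H)))
    (hQfin : FiniteDimensional ℂ (LinearMap.range (Q : H →ₗ[ℂ] H))) :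
    (Module.finrank ℂ (LinearMap.ker ((P - Q - 1 : H →L[ℂ] H) : H →ₗ[ℂ] H)) : ℤ)
        - (Module.finrank ℂ (LinearMap.ker ((Q - P - 1 : H →L[ℂ] H) : H →ₗ[ℂ] H)) : ℤ)
      = (Module.finrank ℂ (LinearMap.range (P : H →ₗ[ℂ] H)) : ℤ)
        - (Module.finrank ℂ (LinearMap.range (Q : H →ₗ[ℂ] H)) : ℤ) := by
  have hP := ContinuousLinearMap.IsStarProjection.isSymmetricProjection ⟨hP2, hPsa⟩
  have hQ := ContinuousLinearMap.IsStarProjection.isSymmetricProjection ⟨hQ2, hQsa⟩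
  rw [show ((P - Q - 1 : H →L[ℂ] H) : H →ₗ[ℂ] H) = P - Q - 1 from rfl,
    show ((Q - P - 1 : H →L[ℂ] H) : H →ₗ[ℂ] H) = Q - P - 1 from rfl,
    hP.ker_sub_sub_one hQ, hQ.ker_sub_sub_one hP]
  have := Submodule.finrank_inf_orthogonal_add_finrank
    (LinearMap.range (P : H →ₗ[ℂ] H)) (LinearMap.range (Q : H →ₗ[ℂ] H))
  omega
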